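/- There exists a constant c‴ > 0 such that for all I ∈ {A, B}, all ν ∈ {1, 2, 3}, all z, y ∈ ℝ² with |z| < 0.33/√3 and |y| < 0.33/√3, and for every m = (m₁, m₂) ∈ ℤ² with m ∉ N_bad(e_{I,ν}), there exists l₀ ∈ {0, 1, 2, 3, 4, 5} with |z + (e_{I,ν} + m₁v₁ + m₂v₂) − y| − |z + e_{I,ν} − R₆₀^{l₀} y| ≥ c‴ |m|. -/

import Mathlib

noncomputable section

open scoped Real

/-- The plane `ℝ²` with the Euclidean norm. -/
abbrev V2 : Type := EuclideanSpace ℝ (Fin 2)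

/-- The vector `(a, b) ∈ ℝ²`. -/
def vec (a b : ℝ) : V2 := WithLp.toLp 2 ![a, b]

/-- The dot product on `ℝ²`. -/
def dot (a b : V2) : ℝ := a 0 * b 0 + a 1 * b 1

/-- `v₁ = (√3/2, 1/2)`. -/
def v1 : V2 := vec (Real.sqrt 3 / 2) (1 / 2)

/-- `v₂ = (√3/2, −1/2)`. -/
def v2 : V2 := vec (Real.sqrt 3 / 2) (-(1 / 2))

/-- The lattice point `m₁ v₁ + m₂ v₂` of `Λ_h`. -/
def lat (m : ℤ × ℤ) : V2 := (m.1 : ℝ) • v1 + (m.2 : ℝ) • v2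

/-- `k₁ = 2π(1/√3, 1)`. -/
def dk1 : V2 := vec (2 * π / Real.sqrt 3) (2 * π)

/-- `k₂ = 2π(1/√3, −1)`. -/
def dk2 : V2 := vec (2 * π / Real.sqrt 3) (-(2 * π))

/-- The dual lattice point `m₁ k₁ + m₂ k₂` of `Λ_h*`. -/
def dlat (m : ℤ × ℤ) : V2 := (m.1 : ℝ) • dk1 + (m.2 : ℝ) • dk2

/-- `K = (0, 4π/3)`. -/
def KK : V2 := vec 0 (4 * π / 3)

/-- Clockwise rotation by `2π/3` about the origin (the matrix `R`). -/
def rotR (x : V2) : V2 :=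
  vec (-(1/2) * x 0 + (Real.sqrt 3 / 2) * x 1) (-(Real.sqrt 3 / 2) * x 0 - (1/2) * x 1)

/-- The transpose `Rᵀ`. -/
def rotRT (x : V2) : V2 :=
  vec (-(1/2) * x 0 - (Real.sqrt 3 / 2) * x 1) ((Real.sqrt 3 / 2) * x 0 - (1/2) * x 1)

/-- Clockwise rotation by `π/3` about the origin (the matrix `R₆₀`). -/
def rot60 (x : V2) : V2 :=
  vec ((1/2) * x 0 + (Real.sqrt 3 / 2) * x 1) (-(Real.sqrt 3 / 2) * x 0 + (1/2) * x 1)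

/-- `e_{A,1} = (1/√3, 0)`. -/
def eA1 : V2 := vec (1 / Real.sqrt 3) 0

/-- `e_{A,ν} = R^{ν−1} e_{A,1}` for `ν = 1, 2, 3` (indexed by `Fin 3`). -/
def eA (ν : Fin 3) : V2 := rotR^[(ν : ℕ)] eA1

/-- `e_{B,ν} = −e_{A,ν}`. -/
def eB (ν : Fin 3) : V2 := -eA ν

/-- `e_{I,ν}` for `I ∈ {A, B}` (`true ↦ A`, `false ↦ B`). -/
def eVec (I : Bool) (ν : Fin 3) : V2 := if I then eA ν else eB ν

/-- `γ(k) = Σ_{ν=1}^3 exp(i k·e_{B,ν})`. -/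
def gam (k : V2) : ℂ := ∑ ν : Fin 3, Complex.exp (Complex.I * (dot k (eB ν)))

/-- `W_TB(k) = |γ(k)|`. -/
def Wtb (k : V2) : ℝ := ‖gam k‖

/-- `v_B = (1/√3, 0)`. -/
def vB : V2 := vec (1 / Real.sqrt 3) 0

/-- The hexagon center `x_c = (1/(2√3), −1/2)`. -/
def xc : V2 := vec (1 / (2 * Real.sqrt 3)) (-(1 / 2))

/-- The rotation operator `ℛ[f](x) = f(x_c + Rᵀ(x − x_c))`. -/
def Rop (f : V2 → ℂ) (x : V2) : ℂ := f (xc + rotRT (x - xc))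

/-- `τ = exp(2πi/3)`. -/
def tau : ℂ := Complex.exp (2 * (π : ℂ) * Complex.I / 3)

/-- The Euclidean norm of an integer pair. -/
def znorm (m : ℤ × ℤ) : ℝ := Real.sqrt ((m.1 : ℝ) ^ 2 + (m.2 : ℝ) ^ 2)

/-- `N_bad(w) = {m ∈ ℤ² : |w + m₁v₁ + m₂v₂| = 1/√3}`. -/
def Nbad (w : V2) : Set (ℤ × ℤ) := {m | ‖w + lat m‖ = 1 / Real.sqrt 3}

/-- The `i`-th standard basis vector of `ℝ²`. -/
def basis2 (i : Fin 2) : V2 := EuclideanSpace.single i 1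

/-- Partial derivative `∂_i f` of a complex-valued function on `ℝ²`. -/
def pd (i : Fin 2) (f : V2 → ℂ) : V2 → ℂ := fun x => fderiv ℝ f x (basis2 i)

/-- The Laplacian `Δf = ∂₁²f + ∂₂²f` of a complex-valued function on `ℝ²`. -/
def lap (f : V2 → ℂ) (x : V2) : ℂ :=
  ∑ i : Fin 2, fderiv ℝ (fun y => fderiv ℝ f y (basis2 i)) x (basis2 i)

/-- The radial profile of the fundamental solution of `−Δ + 1` on `ℝ²`:
`𝒦(r) = (2π)⁻¹ e^{−r} ∫₀^∞ e^{−ζ} ζ^{−1/2} (2r + ζ)^{−1/2} dζ`. -/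
def Kker (r : ℝ) : ℝ :=
  (2 * π)⁻¹ * Real.exp (-r) *
    ∫ ζ in Set.Ioi (0 : ℝ), Real.exp (-ζ) * ζ ^ (-(1/2 : ℝ)) * (2 * r + ζ) ^ (-(1/2 : ℝ))


/-!
Put `w = z + e`. The six turns `R₆₀^l y` are `π/3` apart, so one of them makes an angle of at
most `π/6` with `w`, and then `|w - R₆₀^l y|² ≤ |w|² + |y|² - √3 |w| |y|`; with `|z|, |y| < 0.33/√3`
this gives `|z| + |y| + |w - R₆₀^l y| ≤ 1.08`. On the other side `2⟨e, vᵢ⟩ ∈ {-1, 0, 1}` and the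
Gram matrix of `v₁, v₂` is `[[1, 1/2], [1/2, 1]]`, so `|e + m₁v₁ + m₂v₂|² ∈ 1/3 + ℤ`; off `N_bad(e)`
it is at least `4/3`, and it grows quadratically in `m`, whence `|e + m₁v₁ + m₂v₂| ≥ 1.08 + |m|/1000`.
The triangle inequality `|z + (e + m₁v₁ + m₂v₂) - y| ≥ |e + m₁v₁ + m₂v₂| - |z| - |y|` ends the
proof with `c‴ = 1/1000`.
-/

open scoped InnerProductSpace

lemma norm_sq_eq_coords (x : V2) : ‖x‖ ^ 2 = x 0 ^ 2 + x 1 ^ 2 := by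
  simp [EuclideanSpace.norm_sq_eq, Fin.sum_univ_two]

lemma inner_eq_coords (x y : V2) : ⟪x, y⟫_ℝ = x 0 * y 0 + x 1 * y 1 := by
  simp [PiLp.inner_apply, Fin.sum_univ_two]; ring

@[simp] lemma vec_apply_zero (a b : ℝ) : vec a b 0 = a := rfl

@[simp] lemma vec_apply_one (a b : ℝ) : vec a b 1 = b := rfl

lemma sqrt_three_sq : Real.sqrt 3 ^ 2 = 3 := Real.sq_sqrt (by norm_num)

lemma inv_sqrt_three : (Real.sqrt 3)⁻¹ = Real.sqrt 3 / 3 := by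
  field_simp; rw [sqrt_three_sq]

lemma eq_one_div_sqrt_three_iff {t : ℝ} (ht : 0 ≤ t) : t = 1 / Real.sqrt 3 ↔ t ^ 2 = 1 / 3 := by
  rw [one_div, one_div, ← Real.sqrt_inv, eq_comm, Real.sqrt_eq_iff_eq_sq (by norm_num) ht, eq_comm]

@[simp] lemma rot60_apply_zero (x : V2) : rot60 x 0 = 1 / 2 * x 0 + Real.sqrt 3 / 2 * x 1 := rfl

@[simp] lemma rot60_apply_one (x : V2) : rot60 x 1 = -(Real.sqrt 3 / 2) * x 0 + 1 / 2 * x 1 := rfl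

lemma norm_rot60 (x : V2) : ‖rot60 x‖ = ‖x‖ := by
  rw [← sq_eq_sq₀ (norm_nonneg _) (norm_nonneg _), norm_sq_eq_coords, norm_sq_eq_coords,
    rot60_apply_zero, rot60_apply_one]
  linear_combination (x 0 ^ 2 + x 1 ^ 2) / 4 * sqrt_three_sq

lemma norm_rot60_iterate (n : ℕ) (x : V2) : ‖rot60^[n] x‖ = ‖x‖ := by
  induction n with
  | zero => rfl
  | succ n ih => rw [Function.iterate_succ_apply', norm_rot60, ih]

lemma rot60_neg (x : V2) : rot60 (-x) = -rot60 x := by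
  ext i; fin_cases i <;> simp <;> ring

lemma rot60_sub (x y : V2) : rot60 (x - y) = rot60 x - rot60 y := by
  ext i; fin_cases i <;> simp <;> ring

lemma rot60_rot60 (x : V2) : rot60 (rot60 x) = rot60 x - x := by
  ext i; fin_cases i <;> simp
  · linear_combination (-x 0 / 4) * sqrt_three_sq
  · linear_combination (-x 1 / 4) * sqrt_three_sq

lemma rot60_iterate_three (x : V2) : rot60^[3] x = -x := by
  simp only [Function.iterate_succ_apply', Function.iterate_zero_apply, rot60_rot60, rot60_sub]
  abel

lemma inner_sq_sub_inner_mul_inner_rot60_add_sq (w y : V2) :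
    ⟪w, y⟫_ℝ ^ 2 - ⟪w, y⟫_ℝ * ⟪w, rot60 y⟫_ℝ + ⟪w, rot60 y⟫_ℝ ^ 2
      = (Real.sqrt 3 / 2 * ‖w‖ * ‖y‖) ^ 2 := by
  rw [mul_pow, mul_pow, norm_sq_eq_coords, norm_sq_eq_coords, inner_eq_coords, inner_eq_coords,
    rot60_apply_zero, rot60_apply_one]
  linear_combination
    ((w 0 * y 1 - w 1 * y 0) ^ 2 / 4 - (w 0 ^ 2 + w 1 ^ 2) * (y 0 ^ 2 + y 1 ^ 2) / 4) * sqrt_three_sq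

/-- With `a = ⟪w, y⟫` and `b = ⟪w, rot60 y⟫`, the six numbers are the pairings of `w` with
`rot60^[l] y` for `l = 0, …, 5`. -/
lemma le_or_le_of_sq_sub_mul_add_sq_eq {a b t : ℝ} (h : a ^ 2 - a * b + b ^ 2 = t ^ 2) :
    t ≤ a ∨ t ≤ b ∨ t ≤ b - a ∨ t ≤ -a ∨ t ≤ -b ∨ t ≤ a - b := by
  by_contra! hlt
  obtain ⟨ha, hb, hba, hna, hnb, hab⟩ := hlt
  have ha2 : a ^ 2 < t ^ 2 := by nlinarith
  have hb2 : b ^ 2 < t ^ 2 := by nlinarith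
  have hab2 : (a - b) ^ 2 < t ^ 2 := by nlinarith
  have hprod : (t ^ 2 - a ^ 2) * (t ^ 2 - b ^ 2) = -(a * b) * (a - b) ^ 2 := by
    linear_combination (a * b - t ^ 2) * h
  have hneg : a * b < 0 := by nlinarith [mul_pos (sub_pos.2 ha2) (sub_pos.2 hb2)]
  nlinarith

lemma exists_rot60_iterate_norm_sub_sq_le (w y : V2) : ∃ l : Fin 6,
    ‖w - rot60^[(l : ℕ)] y‖ ^ 2 ≤ ‖w‖ ^ 2 + ‖y‖ ^ 2 - Real.sqrt 3 * ‖w‖ * ‖y‖ := by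
  suffices ∃ l : Fin 6, Real.sqrt 3 / 2 * ‖w‖ * ‖y‖ ≤ ⟪w, rot60^[(l : ℕ)] y⟫_ℝ by
    obtain ⟨l, hl⟩ := this
    refine ⟨l, ?_⟩
    rw [norm_sub_sq_real, norm_rot60_iterate]
    linarith
  rcases le_or_le_of_sq_sub_mul_add_sq_eq (inner_sq_sub_inner_mul_inner_rot60_add_sq w y) with
    h | h | h | h | h | h
  · exact ⟨0, h⟩
  · exact ⟨1, h⟩
  · refine ⟨2, ?_⟩
    simpa [rot60_rot60, inner_sub_right] using h
  · refine ⟨3, ?_⟩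
    simpa [rot60_iterate_three, inner_neg_right] using h
  · refine ⟨4, ?_⟩
    change _ ≤ ⟪w, rot60^[1 + 3] y⟫_ℝ
    rw [Function.iterate_add_apply, rot60_iterate_three]
    simpa [rot60_neg, inner_neg_right] using h
  · refine ⟨5, ?_⟩
    change _ ≤ ⟪w, rot60^[2 + 3] y⟫_ℝ
    rw [Function.iterate_add_apply, rot60_iterate_three]
    simpa [rot60_neg, rot60_rot60, inner_sub_right] using h

/-- The form of the nearest-neighbour vectors `e_{I,ν}` of the honeycomb. -/
def IsBond (e : V2) : Prop :=
  ‖e‖ ^ 2 = 1 / 3 ∧ ∃ L₁ L₂ : ℤ, |L₁| ≤ 1 ∧ |L₂| ≤ 1 ∧ 2 * ⟪e, v1⟫_ℝ = L₁ ∧ 2 * ⟪e, v2⟫_ℝ = L₂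

lemma IsBond.neg {e : V2} (he : IsBond e) : IsBond (-e) := by
  obtain ⟨hn, L₁, L₂, hL₁, hL₂, h₁, h₂⟩ := he
  refine ⟨by rwa [norm_neg], -L₁, -L₂, by rwa [abs_neg], by rwa [abs_neg], ?_, ?_⟩ <;>
    simp [inner_neg_left, h₁, h₂]

lemma eA_zero : eA 0 = vec (Real.sqrt 3 / 3) 0 := by
  simp [eA, eA1, inv_sqrt_three]

lemma eA_one : eA 1 = vec (-(Real.sqrt 3 / 6)) (-(1 / 2)) := by
  ext i; fin_cases i <;> simp [eA, eA1, rotR, inv_sqrt_three]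
  · ring
  · linear_combination (1 / 6) * sqrt_three_sq

lemma eA_two : eA 2 = vec (-(Real.sqrt 3 / 6)) (1 / 2) := by
  change rotR (eA 1) = _
  rw [eA_one]
  ext i; fin_cases i <;> simp [rotR]
  · ring
  · linear_combination (1 / 12) * sqrt_three_sq

lemma isBond_eA (ν : Fin 3) : IsBond (eA ν) := by
  unfold IsBond
  simp only [norm_sq_eq_coords, inner_eq_coords, v1, v2, vec_apply_zero, vec_apply_one]
  fin_cases ν
  · refine ⟨?_, 1, 1, by norm_num, by norm_num, ?_, ?_⟩ <;>
      simp [eA_zero] <;> (ring_nf; linarith [sqrt_three_sq])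
  · refine ⟨?_, -1, 0, by norm_num, by norm_num, ?_, ?_⟩ <;>
      simp [eA_one] <;> (ring_nf; linarith [sqrt_three_sq])
  · refine ⟨?_, 0, -1, by norm_num, by norm_num, ?_, ?_⟩ <;>
      simp [eA_two] <;> (ring_nf; linarith [sqrt_three_sq])

lemma isBond_eVec (I : Bool) (ν : Fin 3) : IsBond (eVec I ν) := by
  cases I
  · exact (isBond_eA ν).neg
  · exact isBond_eA ν

lemma norm_add_lat_sq (e : V2) (m : ℤ × ℤ) :
    ‖e + lat m‖ ^ 2 = ‖e‖ ^ 2 + m.1 * (2 * ⟪e, v1⟫_ℝ) + m.2 * (2 * ⟪e, v2⟫_ℝ)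
      + (m.1 ^ 2 + m.1 * m.2 + m.2 ^ 2) := by
  rw [norm_sq_eq_coords, norm_sq_eq_coords, inner_eq_coords, inner_eq_coords]
  simp only [lat, v1, v2, PiLp.add_apply, PiLp.smul_apply, vec_apply_zero, vec_apply_one,
    smul_eq_mul]
  linear_combination ((m.1 : ℝ) + m.2) ^ 2 / 4 * sqrt_three_sq

lemma neg_sq_sub_four_le_four_mul {L n : ℤ} (hL : |L| ≤ 1) : -(n ^ 2 + 4) ≤ 4 * L * n := by
  obtain ⟨hL₁, hL₂⟩ := abs_le.mp hL
  interval_cases L <;> nlinarith [sq_nonneg (n + 2), sq_nonneg (n - 2)]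

lemma IsBond.add_div_le_norm_add_lat {e : V2} (he : IsBond e) {m : ℤ × ℤ} (hm : m ∉ Nbad e) :
    1.08 + znorm m / 1000 ≤ ‖e + lat m‖ := by
  obtain ⟨hn, L₁, L₂, hL₁, hL₂, h₁, h₂⟩ := he
  set Q : ℤ := m.1 ^ 2 + m.1 * m.2 + m.2 ^ 2 + L₁ * m.1 + L₂ * m.2
  have hD : ‖e + lat m‖ ^ 2 = 1 / 3 + Q := by
    rw [norm_add_lat_sq, hn, h₁, h₂]; push_cast [Q]; ring
  have hQ : 1 ≤ Q := by
    have hQ_nonneg : 0 ≤ Q := by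
      have : (-1 : ℝ) < Q := by nlinarith [sq_nonneg ‖e + lat m‖]
      have : (-1 : ℤ) < Q := by exact_mod_cast this
      omega
    have hQ_ne : Q ≠ 0 := by
      rintro hQ_zero
      refine hm ((eq_one_div_sqrt_three_iff (norm_nonneg _)).mpr ?_)
      rw [hD, hQ_zero]; norm_num
    omega
  have hQm : m.1 ^ 2 + m.2 ^ 2 ≤ 4 * Q + 8 := by
    nlinarith [neg_sq_sub_four_le_four_mul (n := m.1) hL₁, neg_sq_sub_four_le_four_mul (n := m.2) hL₂,
      sq_nonneg (m.1 + m.2)]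
  have hr : znorm m ^ 2 = (m.1 : ℝ) ^ 2 + (m.2 : ℝ) ^ 2 := Real.sq_sqrt (by positivity)
  have hQr : znorm m ^ 2 ≤ 4 * Q + 8 := by rw [hr]; exact_mod_cast hQm
  have hQ' : (1 : ℝ) ≤ Q := by exact_mod_cast hQ
  have hr0 : 0 ≤ znorm m := Real.sqrt_nonneg _
  refine le_of_sq_le_sq ?_ (norm_nonneg _)
  rw [hD]
  nlinarith [sq_nonneg (znorm m - 1)]

lemma le_sub_of_sq_le_sq_add_sq_sub {a β X : ℝ} (hβ : 0 ≤ β) (hβa : β ≤ a)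
    (h : X ^ 2 ≤ a ^ 2 + β ^ 2 - Real.sqrt 3 * a * β) : X ≤ a - (Real.sqrt 3 - 1) / 2 * β := by
  have hs := sqrt_three_sq
  have hs1 : 1 < Real.sqrt 3 := by nlinarith [Real.sqrt_nonneg 3]
  have hs2 : Real.sqrt 3 < 2 := by nlinarith [Real.sqrt_nonneg 3]
  refine le_of_sq_le_sq ?_ (by nlinarith)
  nlinarith [mul_nonneg hβ (sub_nonneg.2 hβa)]

lemma norm_add_norm_add_norm_sub_le {e z y u : V2} (he : ‖e‖ = 1 / Real.sqrt 3)
    (hz : ‖z‖ < 0.33 / Real.sqrt 3) (hy : ‖y‖ < 0.33 / Real.sqrt 3)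
    (hu : ‖z + e - u‖ ^ 2 ≤ ‖z + e‖ ^ 2 + ‖y‖ ^ 2 - Real.sqrt 3 * ‖z + e‖ * ‖y‖) :
    ‖z‖ + ‖y‖ + ‖z + e - u‖ ≤ 1.08 := by
  have hs := sqrt_three_sq
  have hs0 : 0 < Real.sqrt 3 := by positivity
  have hs1 : 1.732 < Real.sqrt 3 := by nlinarith
  have hs2 : Real.sqrt 3 < 1.7321 := by nlinarith
  rw [one_div, inv_sqrt_three] at he
  rw [div_eq_mul_inv, inv_sqrt_three] at hz hy
  have hupper : ‖z + e‖ ≤ ‖z‖ + ‖e‖ := norm_add_le z e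
  have hlower : ‖e‖ - ‖z‖ ≤ ‖z + e‖ := by
    simpa [add_comm] using norm_sub_norm_le e (-z)
  have hnear := le_sub_of_sq_le_sq_add_sq_sub (norm_nonneg y) (by nlinarith) hu
  nlinarith [mul_nonneg (norm_nonneg y) (sub_nonneg.2 hs1.le)]

/-- (Geometric Lemma, part 3.) There is `c‴ > 0` so that for all
`I, ν`, all `z, y` with `|z|, |y| < 0.33/√3` and every `m ∈ ℤ² \ N_bad(e_{I,ν})`,
some `l₀ ∈ {0,…,5}` satisfies
`|z + (e_{I,ν} + m₁v₁ + m₂v₂) − y| − |z + e_{I,ν} − R₆₀^{l₀} y| ≥ c‴ |m|`. -/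
theorem statement12 :
    ∃ c''' : ℝ, 0 < c''' ∧ ∀ (I : Bool) (ν : Fin 3) (z y : V2),
      ‖z‖ < 0.33 / Real.sqrt 3 → ‖y‖ < 0.33 / Real.sqrt 3 →
      ∀ m : ℤ × ℤ, m ∉ Nbad (eVec I ν) → ∃ l₀ : Fin 6,
        c''' * znorm m ≤ ‖z + (eVec I ν + lat m) - y‖ - ‖z + eVec I ν - rot60^[(l₀ : ℕ)] y‖ := by
  refine ⟨1 / 1000, by norm_num, fun I ν z y hz hy m hm => ?_⟩
  have he := isBond_eVec I ν
  obtain ⟨l, hl⟩ := exists_rot60_iterate_norm_sub_sq_le (z + eVec I ν) y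
  refine ⟨l, ?_⟩
  have hfar : ‖eVec I ν + lat m‖ - ‖y - z‖ ≤ ‖z + (eVec I ν + lat m) - y‖ := by
    simpa [sub_sub_eq_add_sub, add_comm] using norm_sub_norm_le (eVec I ν + lat m) (y - z)
  have hyz : ‖y - z‖ ≤ ‖y‖ + ‖z‖ := norm_sub_le y z
  have hgap := he.add_div_le_norm_add_lat hm
  have hnear := norm_add_norm_add_norm_sub_le
    ((eq_one_div_sqrt_three_iff (norm_nonneg _)).mpr he.1) hz hy hl
  linarith
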